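/- Let M₁ ∈ ℝ^{d×n} with Moore–Penrose pseudoinverse P, let Ψ ∈ ℝ^{d×s}, X ∈ ℝⁿ, w ∈ ℝˢ, and set Z₁ = M₁ X + Ψ w. If α > 0 satisfies σ_min((I − M₁ P) Ψ) ≥ α, then ‖w‖ ≤ ‖Z₁‖/α. -/

import Mathlib

open Matrix Filter

/-- Euclidean norm of a vector. -/
noncomputable def enorm {ι : Type*} [Fintype ι] (v : ι → ℝ) : ℝ :=
  Real.sqrt (∑ i, v i ^ 2)

/-- Largest singular value: maximum Euclidean gain over unit vectors. -/
noncomputable def sigmaMax {ι κ : Type*} [Fintype ι] [Fintype κ]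
    (M : Matrix ι κ ℝ) : ℝ :=
  sSup {y | ∃ x : κ → ℝ, _root_.enorm x = 1 ∧ y = _root_.enorm (M.mulVec x)}

/-- Smallest gain: minimum Euclidean gain over unit vectors. -/
noncomputable def sigmaMin {ι κ : Type*} [Fintype ι] [Fintype κ]
    (M : Matrix ι κ ℝ) : ℝ :=
  sInf {y | ∃ x : κ → ℝ, _root_.enorm x = 1 ∧ y = _root_.enorm (M.mulVec x)}

/-- `P` is the Moore–Penrose pseudoinverse of `A`. -/
def IsMPInv {ι κ : Type*} [Fintype ι] [Fintype κ]
    (A : Matrix ι κ ℝ) (P : Matrix κ ι ℝ) : Prop :=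
  A * P * A = A ∧ P * A * P = P ∧ (A * P)ᵀ = A * P ∧ (P * A)ᵀ = P * A

/-- Block-Toeplitz matrix `T_j^{l,w}(g)`: the (a,b) block (1-indexed) is
`g (j + l - a + b - 1)`. -/
def Tblk {q m : ℕ} (g : ℕ → Matrix (Fin q) (Fin m) ℝ) (j l w : ℕ) :
    Matrix (Fin l × Fin q) (Fin w × Fin m) ℝ :=
  Matrix.of fun a b => g (j + l + (b.1 : ℕ) - ((a.1 : ℕ) + 1)) a.2 b.2

/-- Block upper-triangular Toeplitz matrix `T_p(g)`: the (a,b) block is `g (b - a)`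
for `b ≥ a` and `0` otherwise. -/
def Ttri {q m : ℕ} (g : ℕ → Matrix (Fin q) (Fin m) ℝ) (p : ℕ) :
    Matrix (Fin p × Fin q) (Fin p × Fin m) ℝ :=
  Matrix.of fun a b =>
    if (a.1 : ℕ) ≤ (b.1 : ℕ) then g ((b.1 : ℕ) - (a.1 : ℕ)) a.2 b.2 else 0


lemma enorm_nonneg' {ι : Type*} [Fintype ι] (v : ι → ℝ) : 0 ≤ _root_.enorm v :=
  Real.sqrt_nonneg _

lemma enorm_sq {ι : Type*} [Fintype ι] (v : ι → ℝ) : _root_.enorm v ^ 2 = ∑ i, v i ^ 2 :=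
  Real.sq_sqrt (Finset.sum_nonneg fun i _ => sq_nonneg _)

lemma enorm_smul' {ι : Type*} [Fintype ι] (c : ℝ) (v : ι → ℝ) :
    _root_.enorm (c • v) = |c| * _root_.enorm v := by
  unfold _root_.enorm
  rw [← Real.sqrt_sq_eq_abs, ← Real.sqrt_mul (sq_nonneg c), Finset.mul_sum]
  congr 1
  exact Finset.sum_congr rfl fun i _ => by simp [mul_pow]

lemma dot_le_enorm {ι : Type*} [Fintype ι] (u v : ι → ℝ) :
    u ⬝ᵥ v ≤ _root_.enorm u * _root_.enorm v := by
  have h := Finset.sum_mul_sq_le_sq_mul_sq Finset.univ u v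
  have habs : |∑ i, u i * v i| ≤ _root_.enorm u * _root_.enorm v := by
    rw [← Real.sqrt_sq_eq_abs]
    unfold _root_.enorm
    rw [← Real.sqrt_mul (Finset.sum_nonneg fun i _ => sq_nonneg _)]
    exact Real.sqrt_le_sqrt h
  exact (le_abs_self _).trans habs

/-- If `Z₁ = M₁ X + Ψ w` and `σ_min((I − M₁P)Ψ) ≥ α > 0`, then
`‖w‖ ≤ ‖Z₁‖/α`. -/
theorem stmt17 {d n s : ℕ}
    (M₁ : Matrix (Fin d) (Fin n) ℝ) (P : Matrix (Fin n) (Fin d) ℝ) (hP : IsMPInv M₁ P)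
    (Ψ : Matrix (Fin d) (Fin s) ℝ) (X : Fin n → ℝ) (w : Fin s → ℝ)
    (Z₁ : Fin d → ℝ) (hZ₁ : Z₁ = M₁.mulVec X + Ψ.mulVec w)
    (α : ℝ) (hα : 0 < α)
    (hmin : α ≤ sigmaMin ((1 - M₁ * P) * Ψ)) :
    _root_.enorm w ≤ _root_.enorm Z₁ / α := by

  obtain ⟨h1, h2, h3, h4⟩ := hP
  set Q : Matrix (Fin d) (Fin d) ℝ := 1 - M₁ * P with hQ
  have hQsymm : Qᵀ = Q := by simp [hQ, transpose_sub, h3]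
  have hQidem : Q * Q = Q := by
    simp only [hQ, sub_mul, mul_sub, one_mul, mul_one]
    rw [show M₁ * P * (M₁ * P) = M₁ * P by rw [← Matrix.mul_assoc, h1]]
    abel
  have hcontr : ∀ z : Fin d → ℝ, _root_.enorm (Q.mulVec z) ≤ _root_.enorm z := by
    intro z
    have key : Q.mulVec z ⬝ᵥ Q.mulVec z = z ⬝ᵥ Q.mulVec z := by
      rw [dotProduct_mulVec, ← Matrix.mulVec_transpose, hQsymm,
        Matrix.mulVec_mulVec, hQidem]
      exact dotProduct_comm _ _
    have h5 : _root_.enorm (Q.mulVec z) ^ 2 = Q.mulVec z ⬝ᵥ Q.mulVec z := by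
      rw [enorm_sq]; simp [dotProduct, sq]
    have h6 : _root_.enorm (Q.mulVec z) ^ 2 ≤ _root_.enorm z * _root_.enorm (Q.mulVec z) := by
      rw [h5, key]; exact dot_le_enorm _ _
    rcases eq_or_lt_of_le (enorm_nonneg' (Q.mulVec z)) with h | h
    · rw [← h]; exact enorm_nonneg' z
    · nlinarith
  have hQZ : Q.mulVec Z₁ = ((Q * Ψ).mulVec w) := by
    have h0 : Q * M₁ = 0 := by
      rw [hQ, Matrix.sub_mul, Matrix.one_mul, h1, sub_self]
    rw [hZ₁, Matrix.mulVec_add, Matrix.mulVec_mulVec, h0, Matrix.zero_mulVec,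
      zero_add, Matrix.mulVec_mulVec]
  rcases eq_or_lt_of_le (enorm_nonneg' w) with hw | hw
  · rw [← hw]
    exact div_nonneg (enorm_nonneg' _) hα.le
  · have hu : _root_.enorm ((_root_.enorm w)⁻¹ • w) = 1 := by
      rw [enorm_smul', abs_of_pos (inv_pos.mpr hw), inv_mul_cancel₀ (ne_of_gt hw)]
    have hmem : (_root_.enorm w)⁻¹ * _root_.enorm ((Q * Ψ).mulVec w) ∈
        {y | ∃ x : Fin s → ℝ, _root_.enorm x = 1 ∧ y = _root_.enorm (((1 - M₁ * P) * Ψ).mulVec x)} := by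
      refine ⟨(_root_.enorm w)⁻¹ • w, hu, ?_⟩
      rw [Matrix.mulVec_smul, enorm_smul', abs_of_pos (inv_pos.mpr hw), ← hQ]
    have hbdd : BddBelow {y | ∃ x : Fin s → ℝ,
        _root_.enorm x = 1 ∧ y = _root_.enorm (((1 - M₁ * P) * Ψ).mulVec x)} := by
      refine ⟨0, fun y hy => ?_⟩
      obtain ⟨x, _, rfl⟩ := hy
      exact enorm_nonneg' _
    have hle : α ≤ (_root_.enorm w)⁻¹ * _root_.enorm ((Q * Ψ).mulVec w) :=
      hmin.trans (csInf_le hbdd hmem)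
    have hkey : α * _root_.enorm w ≤ _root_.enorm ((Q * Ψ).mulVec w) := by
      rw [le_inv_mul_iff₀ hw] at hle
      linarith
    have hfin : α * _root_.enorm w ≤ _root_.enorm Z₁ := by
      calc α * _root_.enorm w ≤ _root_.enorm ((Q * Ψ).mulVec w) := hkey
        _ = _root_.enorm (Q.mulVec Z₁) := by rw [hQZ]
        _ ≤ _root_.enorm Z₁ := hcontr Z₁
    rw [le_div_iff₀ hα]
    linarith
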